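/- (Main theorem) Let M be a nontrivial Hilbert space contained in H² on which T_z is well defined and satisfies (i) δ‖f‖_M ≤ ‖T_z f‖_M ≤ ‖f‖_M for some δ>0 and all f ∈ M, and (ii) T_z*ⁿ T_z^{n+1}(M) ⊆ T_z(M) for each n ∈ ℕ. Then there exists b ∈ H^∞ such that M is the closure of bH² in the norm of M, ‖bf‖_M ≤ ‖f‖_{H²} for all f ∈ H², and T_z acts as a weighted shift on M (it shifts the orthogonal basis {bzⁿ}). -/

import Mathlib

open scoped InnerProductSpace ENNReal NNReal ComplexConjugate

noncomputable section

def coefn (f : PowerSeries ℂ) (n : ℕ) : ℂ := PowerSeries.coeff n f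

def MemH2 (f : PowerSeries ℂ) : Prop := Summable (fun n => ‖coefn f n‖ ^ 2)

def H2Norm (f : PowerSeries ℂ) : ℝ := Real.sqrt (∑' n, ‖coefn f n‖ ^ 2)

def MemHinf (f : PowerSeries ℂ) : Prop :=
  MemH2 f ∧ ∃ C : ℝ, ∀ z : ℂ, ‖z‖ < 1 → ‖∑' n, coefn f n * z ^ n‖ ≤ C

section Stmt9Aux

set_option linter.unusedSectionVars false


lemma stmt9_aux_coefn_X_pow_mul (f : PowerSeries ℂ) (i k : ℕ) :
    coefn (PowerSeries.X ^ i * f) k = if i ≤ k then coefn f (k - i) else 0 :=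
  PowerSeries.coeff_X_pow_mul' f i k

lemma stmt9_aux_sq_summable_of_memℓp {c : ℕ → ℂ} (h : Memℓp c 2) :
    Summable (fun n => ‖c n‖ ^ 2) := by
  have h2 := h.summable (p := 2) (by norm_num)
  have e2 : (2 : ℝ≥0∞).toReal = ((2 : ℕ) : ℝ) := by norm_num
  rw [e2] at h2
  simpa only [Real.rpow_natCast] using h2

lemma stmt9_aux_memℓp_of_sq_summable {c : ℕ → ℂ} (h : Summable (fun n => ‖c n‖ ^ 2)) :
    Memℓp c 2 := by
  apply memℓp_gen
  have e2 : (2 : ℝ≥0∞).toReal = ((2 : ℕ) : ℝ) := by norm_num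
  rw [e2]
  simpa only [Real.rpow_natCast] using h

variable {E : Type*} [NormedAddCommGroup E] [InnerProductSpace ℂ E] [CompleteSpace E]

lemma stmt9_aux_norm_lp_eq (f : lp (fun _ : ℕ => ℂ) 2) : ‖f‖ = Real.sqrt (∑' n, ‖f n‖ ^ 2) := by
  have h3 := lp.norm_rpow_eq_tsum (p := 2) (by norm_num) f
  have e2 : (2 : ℝ≥0∞).toReal = ((2 : ℕ) : ℝ) := by norm_num
  rw [e2] at h3
  simp only [Real.rpow_natCast] at h3
  rw [← h3, Real.sqrt_sq (norm_nonneg f)]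

lemma stmt9_aux_orth_tsum (u : ℕ → E) (hu : Orthonormal ℂ u) (c : ℕ → ℂ)
    (hc : Summable fun n => ‖c n‖ ^ 2) :
    Summable (fun n => c n • u n) ∧ ‖∑' n, c n • u n‖ ^ 2 = ∑' n, ‖c n‖ ^ 2 := by
  have hV := hu.orthogonalFamily
  have hsum : Summable (fun n => c n • u n) := by
    have := (hV.summable_iff_norm_sq_summable c).2 hc
    simpa only [LinearIsometry.toSpanSingleton_apply] using this
  refine ⟨hsum, ?_⟩
  have hmem : Memℓp c 2 := stmt9_aux_memℓp_of_sq_summable hc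
  set f : lp (fun _ : ℕ => ℂ) 2 := ⟨c, hmem⟩ with hf
  have happ : hV.linearIsometry f = ∑' n, c n • u n := by
    rw [hV.linearIsometry_apply]
    simp only [LinearIsometry.toSpanSingleton_apply]
    rfl
  have h1 : ‖hV.linearIsometry f‖ = ‖f‖ := hV.linearIsometry.norm_map f
  have h2 : ‖f‖ = Real.sqrt (∑' n, ‖c n‖ ^ 2) := stmt9_aux_norm_lp_eq f
  rw [← happ, h1, h2, Real.sq_sqrt]
  exact tsum_nonneg (fun n => sq_nonneg _)


lemma stmt9_aux_pow_apply_succ (A : E →L[ℂ] E) (n : ℕ) (x : E) :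
    (A ^ (n + 1)) x = A ((A ^ n) x) := by
  rw [pow_succ']; rfl

lemma stmt9_aux_pow_apply_succ' (A : E →L[ℂ] E) (n : ℕ) (x : E) :
    (A ^ (n + 1)) x = (A ^ n) (A x) := by
  rw [pow_succ]; rfl

lemma stmt9_aux_build (J : E →ₗ[ℂ] PowerSeries ℂ) (T : E →L[ℂ] E)
    (hJpow : ∀ (n : ℕ) (x : E), J ((T ^ n) x) = PowerSeries.X ^ n * J x)
    (w : E) (hwpow_ne : ∀ n : ℕ, (T ^ n) w ≠ 0)
    (hwpow_le : ∀ n : ℕ, ‖(T ^ n) w‖ ≤ ‖w‖)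
    (horthw : ∀ m n : ℕ, m ≠ n → ⟪(T ^ m) w, (T ^ n) w⟫_ℂ = 0)
    (g : ℕ → ℂ) (hg : Summable fun n => ‖g n‖ ^ 2) :
    ∃ x : E, HasSum (fun n => g n • (T ^ n) w) x ∧
      ‖x‖ ^ 2 ≤ (∑' n, ‖g n‖ ^ 2) * ‖w‖ ^ 2 ∧
      (∀ k, coefn (J x) k = ∑ i ∈ Finset.range (k + 1), g i * coefn (J w) (k - i)) := by
  -- the orthonormal family
  set u : ℕ → E := fun n => ((‖(T ^ n) w‖ : ℂ))⁻¹ • (T ^ n) w with hu_def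
  have hnorm_ne : ∀ n : ℕ, (‖(T ^ n) w‖ : ℝ) ≠ 0 := fun n => norm_ne_zero_iff.2 (hwpow_ne n)
  have hnormC_ne : ∀ n : ℕ, ((‖(T ^ n) w‖ : ℂ)) ≠ 0 := fun n => by
    exact_mod_cast Complex.ofReal_ne_zero.2 (hnorm_ne n)
  have hu : Orthonormal ℂ u := by
    constructor
    · intro n
      rw [hu_def]
      simp only [norm_smul, norm_inv, Complex.norm_real]
      rw [Real.norm_eq_abs, abs_of_nonneg (norm_nonneg _)]
      rw [inv_mul_cancel₀ (hnorm_ne n)]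
    · intro m n hmn
      simp only [hu_def, inner_smul_left, inner_smul_right, horthw m n hmn, mul_zero]
  have hcu : ∀ (a : ℕ → ℂ) (n : ℕ), (a n * (‖(T ^ n) w‖ : ℂ)) • u n = a n • (T ^ n) w := by
    intro a n
    rw [hu_def]
    rw [smul_smul, mul_assoc, mul_inv_cancel₀ (hnormC_ne n), mul_one]
  -- coefficients
  set c : ℕ → ℂ := fun n => g n * (‖(T ^ n) w‖ : ℂ) with hc_def
  have hcnorm : ∀ (a : ℕ → ℂ) (n : ℕ), ‖a n * (‖(T ^ n) w‖ : ℂ)‖ ^ 2 ≤ ‖a n‖ ^ 2 * ‖w‖ ^ 2 := by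
    intro a n
    rw [norm_mul, Complex.norm_real, Real.norm_eq_abs, abs_of_nonneg (norm_nonneg _), mul_pow]
    have h1 : ‖(T ^ n) w‖ ^ 2 ≤ ‖w‖ ^ 2 := by
      have := hwpow_le n
      nlinarith [norm_nonneg ((T ^ n) w)]
    nlinarith [sq_nonneg ‖a n‖]
  have hcsum : ∀ (a : ℕ → ℂ), Summable (fun n => ‖a n‖ ^ 2) →
      Summable (fun n => ‖a n * (‖(T ^ n) w‖ : ℂ)‖ ^ 2) := by
    intro a ha
    apply Summable.of_nonneg_of_le (fun n => sq_nonneg _) (fun n => hcnorm a n)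
    exact ha.mul_right _
  obtain ⟨hsum0, hnorm0⟩ := stmt9_aux_orth_tsum u hu c (hcsum g hg)
  have hsum : Summable (fun n => g n • (T ^ n) w) := by
    refine hsum0.congr (fun n => hcu g n)
  set x : E := ∑' n, g n • (T ^ n) w with hx_def
  have hxc : x = ∑' n, c n • u n := tsum_congr (fun n => (hcu g n).symm)
  refine ⟨x, hsum.hasSum, ?_, ?_⟩
  · rw [hxc, hnorm0]
    calc (∑' n, ‖c n‖ ^ 2) ≤ ∑' n, ‖g n‖ ^ 2 * ‖w‖ ^ 2 :=
          Summable.tsum_le_tsum (fun n => hcnorm g n) (hcsum g hg) (hg.mul_right _)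
      _ = (∑' n, ‖g n‖ ^ 2) * ‖w‖ ^ 2 := tsum_mul_right
  · intro k
    -- split the sum
    have hsplit := (Summable.sum_add_tsum_nat_add (f := fun n => g n • (T ^ n) w) (k + 1) hsum).symm
    -- the tail is in the range of T^(k+1)
    have htail_el : ∀ i : ℕ, g (i + (k + 1)) • (T ^ (i + (k + 1))) w
        = (T ^ (k + 1)) (g (i + (k + 1)) • (T ^ i) w) := by
      intro i
      rw [map_smul]
      congr 1
      rw [add_comm i (k + 1), pow_add, ContinuousLinearMap.mul_apply]
    have hshift : Summable (fun i => ‖g (i + (k + 1))‖ ^ 2) :=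
      (summable_nat_add_iff (f := fun n => ‖g n‖ ^ 2) (k + 1)).2 hg
    have hysum : Summable (fun i => g (i + (k + 1)) • (T ^ i) w) := by
      have := (stmt9_aux_orth_tsum u hu (fun i => g (i + (k + 1)) * (‖(T ^ i) w‖ : ℂ))
        (hcsum _ hshift)).1
      exact this.congr (fun n => hcu (fun i => g (i + (k + 1))) n)
    set y : E := ∑' i, g (i + (k + 1)) • (T ^ i) w with hy_def
    have htail : ∑' i, g (i + (k + 1)) • (T ^ (i + (k + 1))) w = (T ^ (k + 1)) y := by
      rw [hy_def, ContinuousLinearMap.map_tsum _ hysum]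
      exact tsum_congr htail_el
    have hxeq : x = (∑ i ∈ Finset.range (k + 1), g i • (T ^ i) w) + (T ^ (k + 1)) y := by
      rw [hx_def, hsplit, htail]
    rw [hxeq]
    have hJx : J ((∑ i ∈ Finset.range (k + 1), g i • (T ^ i) w) + (T ^ (k + 1)) y)
        = (∑ i ∈ Finset.range (k + 1), g i • (PowerSeries.X ^ i * J w))
          + PowerSeries.X ^ (k + 1) * J y := by
      rw [map_add, map_sum, hJpow]
      congr 1
      refine Finset.sum_congr rfl (fun i _ => ?_)
      rw [map_smul, hJpow]
    rw [show coefn (J ((∑ i ∈ Finset.range (k + 1), g i • (T ^ i) w) + (T ^ (k + 1)) y)) k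
        = PowerSeries.coeff k (J ((∑ i ∈ Finset.range (k + 1), g i • (T ^ i) w)
          + (T ^ (k + 1)) y)) from rfl, hJx, map_add, map_sum]
    have hlast : PowerSeries.coeff k (PowerSeries.X ^ (k + 1) * J y) = 0 := by
      rw [PowerSeries.coeff_X_pow_mul']
      simp
    rw [hlast, add_zero]
    refine Finset.sum_congr rfl (fun i hi => ?_)
    rw [map_smul, smul_eq_mul]
    congr 1
    have hik : i ≤ k := Nat.lt_succ_iff.1 (Finset.mem_range.1 hi)
    rw [show (PowerSeries.coeff k) (PowerSeries.X ^ i * J w) = coefn (PowerSeries.X ^ i * J w) k from rfl,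
      stmt9_aux_coefn_X_pow_mul, if_pos hik]


omit [CompleteSpace E] in
lemma stmt9_aux_memH2_add {f g : PowerSeries ℂ} (hf : MemH2 f) (hg : MemH2 g) : MemH2 (f + g) := by
  have h : ∀ n, ‖coefn (f + g) n‖ ^ 2 ≤ 2 * ‖coefn f n‖ ^ 2 + 2 * ‖coefn g n‖ ^ 2 := by
    intro n
    have e : coefn (f + g) n = coefn f n + coefn g n := map_add _ _ _
    rw [e]
    have h1 := norm_add_le (coefn f n) (coefn g n)
    nlinarith [norm_nonneg (coefn f n), norm_nonneg (coefn g n),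
      norm_nonneg (coefn f n + coefn g n), sq_nonneg (‖coefn f n‖ - ‖coefn g n‖)]
  exact Summable.of_nonneg_of_le (fun n => sq_nonneg _) h ((hf.mul_left 2).add (hg.mul_left 2))

omit [CompleteSpace E] in
lemma stmt9_aux_memH2_smul (c : ℂ) {f : PowerSeries ℂ} (hf : MemH2 f) : MemH2 (c • f) := by
  have h : ∀ n, ‖coefn (c • f) n‖ ^ 2 = ‖c‖ ^ 2 * ‖coefn f n‖ ^ 2 := by
    intro n
    have e : coefn (c • f) n = c * coefn f n := by
      simp [coefn]
    rw [e, norm_mul, mul_pow]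
  exact (hf.mul_left (‖c‖ ^ 2)).congr (fun n => (h n).symm)

lemma stmt9_aux_memH2_X_pow (n : ℕ) : MemH2 (PowerSeries.X ^ n : PowerSeries ℂ) := by
  apply summable_of_ne_finset_zero (s := {n})
  intro k hk
  simp only [Finset.mem_singleton] at hk
  rw [show coefn (PowerSeries.X ^ n) k = if k = n then 1 else 0 from PowerSeries.coeff_X_pow k n,
    if_neg hk]
  simp

lemma stmt9_aux_hinf_bound (b : PowerSeries ℂ) (hb : MemH2 b)
    (hmul : ∀ g : ℕ → ℂ, Summable (fun n => ‖g n‖ ^ 2) → MemH2 (b * PowerSeries.mk g)) :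
    ∃ C : ℝ, ∀ z : ℂ, ‖z‖ < 1 → ‖∑' n, coefn b n * z ^ n‖ ≤ C := by
  classical
  have hpos : ∀ z : {z : ℂ // ‖z‖ < 1}, (0:ℝ) < 1 - ‖z.1‖ ^ 2 := fun z => by
    nlinarith [norm_nonneg z.1, z.2]
  have hkmem : ∀ z : {z : ℂ // ‖z‖ < 1}, Memℓp (fun n : ℕ => (starRingEnd ℂ z.1) ^ n) 2 := by
    intro z
    apply stmt9_aux_memℓp_of_sq_summable
    have he : ∀ n : ℕ, ‖(starRingEnd ℂ z.1) ^ n‖ ^ 2 = (‖z.1‖ ^ 2) ^ n := by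
      intro n
      rw [norm_pow, RCLike.norm_conj]
      ring
    have hgeo := summable_geometric_of_lt_one (r := ‖z.1‖ ^ 2) (by positivity)
      (by nlinarith [norm_nonneg z.1, z.2])
    exact hgeo.congr (fun n => (he n).symm)
  set kz : {z : ℂ // ‖z‖ < 1} → lp (fun _ : ℕ => ℂ) 2 :=
    fun z => ⟨fun n => (starRingEnd ℂ z.1) ^ n, hkmem z⟩ with hkz_def
  have heval : ∀ (z : {z : ℂ // ‖z‖ < 1}) (f : lp (fun _ : ℕ => ℂ) 2),
      ⟪kz z, f⟫_ℂ = ∑' n, f n * z.1 ^ n := by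
    intro z f
    rw [lp.inner_eq_tsum]
    apply tsum_congr
    intro n
    rw [RCLike.inner_apply, show (kz z) n = (starRingEnd ℂ z.1) ^ n from rfl,
      map_pow, RCLike.conj_conj]
  have hkz_norm : ∀ z : {z : ℂ // ‖z‖ < 1}, ‖kz z‖ = Real.sqrt ((1 - ‖z.1‖ ^ 2)⁻¹) := by
    intro z
    rw [stmt9_aux_norm_lp_eq]
    congr 1
    have he : ∀ n : ℕ, ‖(kz z) n‖ ^ 2 = (‖z.1‖ ^ 2) ^ n := by
      intro n
      rw [show (kz z) n = (starRingEnd ℂ z.1) ^ n from rfl, norm_pow, RCLike.norm_conj]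
      ring
    rw [tsum_congr he]
    exact tsum_geometric_of_lt_one (by positivity) (by nlinarith [norm_nonneg z.1, z.2])
  have hone : ∀ z : {z : ℂ // ‖z‖ < 1},
      Real.sqrt (1 - ‖z.1‖ ^ 2) * Real.sqrt ((1 - ‖z.1‖ ^ 2)⁻¹) = 1 := by
    intro z
    rw [Real.sqrt_inv, mul_inv_cancel₀ (Real.sqrt_ne_zero'.2 (hpos z))]
  set B : ℂ → ℂ := fun zz => ∑' n, coefn b n * zz ^ n with hB_def
  set φ : {z : ℂ // ‖z‖ < 1} → (lp (fun _ : ℕ => ℂ) 2 →L[ℂ] ℂ) := fun z =>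
    ((Real.sqrt (1 - ‖z.1‖ ^ 2) : ℂ) * B z.1) • innerSL ℂ (kz z) with hφ_def
  have hφapp : ∀ (z : {z : ℂ // ‖z‖ < 1}) (f : lp (fun _ : ℕ => ℂ) 2),
      φ z f = ((Real.sqrt (1 - ‖z.1‖ ^ 2) : ℂ) * B z.1) * ⟪kz z, f⟫_ℂ := by
    intro z f
    rw [hφ_def]
    simp only [ContinuousLinearMap.smul_apply, innerSL_apply_apply, smul_eq_mul]
  set blp : lp (fun _ : ℕ => ℂ) 2 := ⟨fun n => coefn b n, stmt9_aux_memℓp_of_sq_summable hb⟩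
    with hblp_def
  have hconj2 : ((2:ℝ≥0∞).toReal).HolderConjugate ((2:ℝ≥0∞).toReal) := by
    rw [show (2:ℝ≥0∞).toReal = 2 by norm_num]
    constructor <;> norm_num
  have hpt : ∀ f : lp (fun _ : ℕ => ℂ) 2, ∃ C, ∀ z : {z : ℂ // ‖z‖ < 1}, ‖φ z f‖ ≤ C := by
    intro f
    have hf2 : Summable fun n => ‖f n‖ ^ 2 := stmt9_aux_sq_summable_of_memℓp (lp.memℓp f)
    have hc2 : Summable fun k => ‖coefn (b * PowerSeries.mk (fun n => f n)) k‖ ^ 2 :=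
      hmul (fun n => f n) hf2
    set clp : lp (fun _ : ℕ => ℂ) 2 :=
      ⟨fun k => coefn (b * PowerSeries.mk (fun n => f n)) k, stmt9_aux_memℓp_of_sq_summable hc2⟩
      with hclp_def
    refine ⟨‖clp‖, ?_⟩
    intro z
    have hs1 : Summable fun n => ‖coefn b n * z.1 ^ n‖ := by
      refine (lp.summable_mul hconj2 blp (kz z)).congr (fun n => ?_)
      rw [show blp n = coefn b n from rfl, show (kz z) n = (starRingEnd ℂ z.1) ^ n from rfl,
        norm_mul, norm_pow, norm_pow, RCLike.norm_conj]
    have hs2 : Summable fun n => ‖(f n : ℂ) * z.1 ^ n‖ := by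
      refine (lp.summable_mul hconj2 f (kz z)).congr (fun n => ?_)
      rw [show (kz z) n = (starRingEnd ℂ z.1) ^ n from rfl,
        norm_mul, norm_pow, norm_pow, RCLike.norm_conj]
    have hcoefmul : ∀ k : ℕ, clp k
        = ∑ p ∈ Finset.HasAntidiagonal.antidiagonal k, coefn b p.1 * f p.2 := by
      intro k
      rw [show clp k = PowerSeries.coeff k (b * PowerSeries.mk (fun n => f n)) from rfl,
        PowerSeries.coeff_mul]
      apply Finset.sum_congr rfl
      intro p hp
      rw [PowerSeries.coeff_mk]
      rfl
    have hprod : B z.1 * (∑' n, f n * z.1 ^ n) = ∑' k, clp k * z.1 ^ k := by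
      rw [hB_def]
      rw [tsum_mul_tsum_eq_tsum_sum_antidiagonal_of_summable_norm hs1 hs2]
      apply tsum_congr
      intro k
      rw [hcoefmul k, Finset.sum_mul]
      apply Finset.sum_congr rfl
      intro p hp
      have hpk : p.1 + p.2 = k := Finset.HasAntidiagonal.mem_antidiagonal.1 hp
      rw [← hpk, pow_add]
      ring
    have hCS : ‖∑' k, clp k * z.1 ^ k‖ ≤ Real.sqrt ((1 - ‖z.1‖ ^ 2)⁻¹) * ‖clp‖ := by
      have h := norm_inner_le_norm (𝕜 := ℂ) (kz z) clp
      rw [heval z clp, hkz_norm z] at h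
      exact h
    have hstep : ‖φ z f‖ = Real.sqrt (1 - ‖z.1‖ ^ 2) * ‖∑' k, clp k * z.1 ^ k‖ := by
      rw [hφapp z f, heval z f, mul_assoc, hprod, norm_mul]
      congr 1
      rw [Complex.norm_real, Real.norm_eq_abs, abs_of_nonneg (Real.sqrt_nonneg _)]
    calc ‖φ z f‖ = Real.sqrt (1 - ‖z.1‖ ^ 2) * ‖∑' k, clp k * z.1 ^ k‖ := hstep
      _ ≤ Real.sqrt (1 - ‖z.1‖ ^ 2) * (Real.sqrt ((1 - ‖z.1‖ ^ 2)⁻¹) * ‖clp‖) :=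
          mul_le_mul_of_nonneg_left hCS (Real.sqrt_nonneg _)
      _ = (Real.sqrt (1 - ‖z.1‖ ^ 2) * Real.sqrt ((1 - ‖z.1‖ ^ 2)⁻¹)) * ‖clp‖ := by ring
      _ = ‖clp‖ := by rw [hone z, one_mul]
  obtain ⟨C', hC'⟩ := banach_steinhaus hpt
  refine ⟨C', ?_⟩
  intro z hz
  set zD : {z : ℂ // ‖z‖ < 1} := ⟨z, hz⟩ with hzD_def
  have h1 := (φ zD).le_opNorm (kz zD)
  have h2 : ‖φ zD (kz zD)‖ = (Real.sqrt (1 - ‖zD.1‖ ^ 2) * ‖kz zD‖) * (‖B zD.1‖ * ‖kz zD‖) := by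
    rw [hφapp, show ⟪kz zD, kz zD⟫_ℂ = ((‖kz zD‖ : ℂ)) ^ 2 from inner_self_eq_norm_sq_to_K _,
      norm_mul, norm_mul, norm_pow, Complex.norm_real, Real.norm_eq_abs,
      abs_of_nonneg (Real.sqrt_nonneg _), Complex.norm_real, Real.norm_eq_abs,
      abs_of_nonneg (norm_nonneg _)]
    ring
  have h3 : Real.sqrt (1 - ‖zD.1‖ ^ 2) * ‖kz zD‖ = 1 := by
    rw [hkz_norm zD]
    exact hone zD
  rw [h3, one_mul] at h2
  rw [h2] at h1
  have hkpos : 0 < ‖kz zD‖ := by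
    rw [hkz_norm zD]
    exact Real.sqrt_pos.2 (inv_pos.2 (hpos zD))
  have h4 : ‖B zD.1‖ ≤ ‖φ zD‖ := le_of_mul_le_mul_right h1 hkpos
  exact le_trans h4 (hC' zD)


end Stmt9Aux

/-- Main theorem: If `M` is a nontrivial Hilbert space inside `H²` on which
`T_z` satisfies `δ‖f‖ ≤ ‖T_z f‖ ≤ ‖f‖` and `T_z*ⁿ T_z^{n+1}(M) ⊆ T_z(M)` for all `n`,
then there is `b ∈ H^∞` with `M = closure of bH²` (in `M`), `‖bf‖_M ≤ ‖f‖_{H²}`, and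
`T_z` acts as a weighted shift on `M`: it shifts the orthogonal basis `{bzⁿ}`. -/
theorem stmt9
    {E : Type*} [NormedAddCommGroup E] [InnerProductSpace ℂ E] [CompleteSpace E]
    (J : E →ₗ[ℂ] PowerSeries ℂ) (hJinj : Function.Injective J)
    (hH2 : ∀ x : E, MemH2 (J x))
    (hnt : ∃ x : E, x ≠ 0)
    (T : E →L[ℂ] E) (hT : ∀ x : E, J (T x) = PowerSeries.X * J x)
    (δ : ℝ) (hδ : 0 < δ)
    (hlow : ∀ x : E, δ * ‖x‖ ≤ ‖T x‖)
    (hup : ∀ x : E, ‖T x‖ ≤ ‖x‖)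
    (hadj : ∀ n : ℕ, ∀ x : E,
      ((ContinuousLinearMap.adjoint T) ^ n) ((T ^ (n + 1)) x) ∈ LinearMap.range (T : E →ₗ[ℂ] E)) :
    ∃ b : PowerSeries ℂ, MemHinf b ∧
      (∀ g : PowerSeries ℂ, MemH2 g → ∃ x : E, J x = b * g ∧ ‖x‖ ≤ H2Norm g) ∧
      Dense {x : E | ∃ g : PowerSeries ℂ, MemH2 g ∧ J x = b * g} ∧
      (∃ xb : E, J xb = b ∧
        (∀ n : ℕ, (T ^ n) xb ≠ 0) ∧
        (∀ m n : ℕ, m ≠ n → ⟪(T ^ m) xb, (T ^ n) xb⟫_ℂ = 0) ∧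
        (Submodule.span ℂ (Set.range fun n : ℕ => (T ^ n) xb)).topologicalClosure = ⊤) := by
  classical
  have hJpow : ∀ (n : ℕ) (x : E), J ((T ^ n) x) = PowerSeries.X ^ n * J x := by
    intro n
    induction n with
    | zero => intro x; simp
    | succ n ih =>
      intro x
      rw [stmt9_aux_pow_apply_succ' T n x, ih (T x), hT x, pow_succ]
      ring
  have hup_pow : ∀ (n : ℕ) (x : E), ‖(T ^ n) x‖ ≤ ‖x‖ := by
    intro n
    induction n with
    | zero => intro x; simp
    | succ n ih =>
      intro x
      rw [stmt9_aux_pow_apply_succ]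
      exact (hup _).trans (ih x)
  have hlow_pow : ∀ (n : ℕ) (x : E), δ ^ n * ‖x‖ ≤ ‖(T ^ n) x‖ := by
    intro n
    induction n with
    | zero => intro x; simp
    | succ n ih =>
      intro x
      rw [stmt9_aux_pow_apply_succ]
      calc δ ^ (n + 1) * ‖x‖ = δ * (δ ^ n * ‖x‖) := by ring
        _ ≤ δ * ‖(T ^ n) x‖ := mul_le_mul_of_nonneg_left (ih x) hδ.le
        _ ≤ ‖T ((T ^ n) x)‖ := hlow _
  have hTne : ∀ (n : ℕ) (x : E), x ≠ 0 → (T ^ n) x ≠ 0 := by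
    intro n x hx h0
    have h1 := hlow_pow n x
    rw [h0, norm_zero] at h1
    have h2 : 0 < δ ^ n := pow_pos hδ n
    have h3 : 0 < ‖x‖ := norm_pos_iff.2 hx
    nlinarith
  -- range of T is closed
  have hanti : AntilipschitzWith ⟨δ⁻¹, inv_nonneg.2 hδ.le⟩ T := by
    apply T.antilipschitz_of_bound
    intro x
    have h1 := mul_le_mul_of_nonneg_left (hlow x) (inv_nonneg.2 hδ.le)
    rw [← mul_assoc, inv_mul_cancel₀ hδ.ne', one_mul] at h1
    exact h1
  have hK_closed : IsClosed ((LinearMap.range (T : E →ₗ[ℂ] E) : Submodule ℂ E) : Set E) := by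
    have h1 := hanti.isClosed_range T.uniformContinuous
    rwa [LinearMap.coe_range]
  haveI : CompleteSpace (LinearMap.range (T : E →ₗ[ℂ] E) : Submodule ℂ E) := hK_closed.completeSpace_coe
  set W : Submodule ℂ E := (LinearMap.range (T : E →ₗ[ℂ] E))ᗮ with hWdef
  have hWK : ∀ w' ∈ W, ∀ u ∈ (LinearMap.range (T : E →ₗ[ℂ] E) : Submodule ℂ E), ⟪u, w'⟫_ℂ = 0 :=
    fun w' hw' u hu => ((Submodule.mem_orthogonal _ w').1 hw') u hu
  have hmove : ∀ (n : ℕ) (u v : E),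
      ⟪u, (T ^ n) v⟫_ℂ = ⟪((ContinuousLinearMap.adjoint T) ^ n) u, v⟫_ℂ := by
    intro n
    induction n with
    | zero => intro u v; simp
    | succ n ih =>
      intro u v
      calc ⟪u, (T ^ (n + 1)) v⟫_ℂ = ⟪u, (T ^ n) (T v)⟫_ℂ := by rw [stmt9_aux_pow_apply_succ']
        _ = ⟪((ContinuousLinearMap.adjoint T) ^ n) u, T v⟫_ℂ := ih u (T v)
        _ = ⟪ContinuousLinearMap.adjoint T (((ContinuousLinearMap.adjoint T) ^ n) u), v⟫_ℂ :=
            (ContinuousLinearMap.adjoint_inner_left T v _).symm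
        _ = ⟪((ContinuousLinearMap.adjoint T) ^ (n + 1)) u, v⟫_ℂ := by rw [stmt9_aux_pow_apply_succ]
  have hmove2 : ∀ (n : ℕ) (u v : E),
      ⟪(T ^ n) u, v⟫_ℂ = ⟪u, ((ContinuousLinearMap.adjoint T) ^ n) v⟫_ℂ := by
    intro n u v
    calc ⟪(T ^ n) u, v⟫_ℂ = conj ⟪v, (T ^ n) u⟫_ℂ := (inner_conj_symm _ _).symm
      _ = conj ⟪((ContinuousLinearMap.adjoint T) ^ n) v, u⟫_ℂ := by rw [hmove]
      _ = ⟪u, ((ContinuousLinearMap.adjoint T) ^ n) v⟫_ℂ := inner_conj_symm _ _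
  have horth_gt : ∀ w1 ∈ W, ∀ w2 ∈ W, ∀ m n : ℕ, n < m → ⟪(T ^ m) w1, (T ^ n) w2⟫_ℂ = 0 := by
    intro w1 hw1 w2 hw2 m n hnm
    obtain ⟨k, rfl⟩ : ∃ k, m = n + 1 + k := ⟨m - (n + 1), by omega⟩
    rw [hmove n ((T ^ (n + 1 + k)) w1) w2]
    apply hWK w2 hw2
    have h1 : (T ^ (n + 1 + k)) w1 = (T ^ (n + 1)) ((T ^ k) w1) := by
      rw [pow_add, ContinuousLinearMap.mul_apply]
    rw [h1]
    exact hadj n ((T ^ k) w1)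
  have horth1 : ∀ w1 ∈ W, ∀ w2 ∈ W, ∀ m n : ℕ, m ≠ n → ⟪(T ^ m) w1, (T ^ n) w2⟫_ℂ = 0 := by
    intro w1 hw1 w2 hw2 m n hmn
    rcases Nat.lt_or_ge n m with h | h
    · exact horth_gt w1 hw1 w2 hw2 m n h
    · have hlt : m < n := by omega
      have h2 := horth_gt w2 hw2 w1 hw1 n m hlt
      rw [← inner_conj_symm, h2, map_zero]
  have hSW : ∀ (k : ℕ), ∀ w' ∈ W,
      ((ContinuousLinearMap.adjoint T ^ k)) ((T ^ k) w') ∈ W := by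
    intro k w' hw'
    rw [hWdef, Submodule.mem_orthogonal]
    intro u hu
    obtain ⟨v, rfl⟩ := LinearMap.mem_range.1 hu
    simp only [ContinuousLinearMap.coe_coe]
    rw [← hmove2 k (T v) ((T ^ k) w'), hmove k ((T ^ k) (T v)) w',
      show (T ^ k) (T v) = (T ^ (k + 1)) v from (stmt9_aux_pow_apply_succ' T k v).symm]
    exact hWK w' hw' _ (hadj k v)
  -- W is nontrivial
  have hex : ∃ w0, w0 ∈ W ∧ w0 ≠ 0 := by
    by_contra hcon
    push_neg at hcon
    have hWbot : W = ⊥ := (Submodule.eq_bot_iff W).2 (fun x hx => hcon x hx)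
    have hKtop : (LinearMap.range (T : E →ₗ[ℂ] E) : Submodule ℂ E) = ⊤ := by
      calc (LinearMap.range (T : E →ₗ[ℂ] E) : Submodule ℂ E) = ((LinearMap.range (T : E →ₗ[ℂ] E))ᗮ)ᗮ :=
            (Submodule.orthogonal_orthogonal _).symm
        _ = (⊥ : Submodule ℂ E)ᗮ := by rw [← hWdef, hWbot]
        _ = ⊤ := Submodule.bot_orthogonal_eq_top
    have hsurj : ∀ (n : ℕ) (x : E), ∃ y, (T ^ n) y = x := by
      intro n
      induction n with
      | zero => exact fun x => ⟨x, by simp⟩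
      | succ n ih =>
        intro x
        obtain ⟨y, hy⟩ := ih x
        have hy2 : y ∈ (LinearMap.range (T : E →ₗ[ℂ] E) : Submodule ℂ E) := by rw [hKtop]; trivial
        obtain ⟨z, hz⟩ := LinearMap.mem_range.1 hy2
        simp only [ContinuousLinearMap.coe_coe] at hz
        exact ⟨z, by rw [stmt9_aux_pow_apply_succ', hz, hy]⟩
    obtain ⟨x0, hx0⟩ := hnt
    apply hx0
    apply hJinj
    rw [map_zero]
    ext k
    obtain ⟨y, hy⟩ := hsurj (k + 1) x0
    rw [← hy, hJpow, PowerSeries.coeff_X_pow_mul']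
    simp
  obtain ⟨w0, hw0W, hw0ne⟩ := hex
  have hw0norm : ‖w0‖ ≠ 0 := norm_ne_zero_iff.2 hw0ne
  set w : E := ((‖w0‖ : ℂ))⁻¹ • w0 with hw_def
  have hwW : w ∈ W := Submodule.smul_mem W _ hw0W
  have hwnorm : ‖w‖ = 1 := by
    rw [hw_def, norm_smul, norm_inv, Complex.norm_real, Real.norm_eq_abs,
      abs_of_nonneg (norm_nonneg _), inv_mul_cancel₀ hw0norm]
  have hwne : w ≠ 0 := by
    intro h
    rw [h, norm_zero] at hwnorm
    exact zero_ne_one hwnorm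
  -- dimension one
  have hdim : ∀ w1 ∈ W, ∀ w2 ∈ W, ⟪w1, w2⟫_ℂ = 0 → w1 = 0 ∨ w2 = 0 := by
    intro w1 hw1 w2 hw2 hortho
    by_cases h1 : w1 = 0
    · exact Or.inl h1
    by_cases h2 : w2 = 0
    · exact Or.inr h2
    exfalso
    set f : ℕ → ℂ := fun n => coefn (J w1) n with hf_def
    set g : ℕ → ℂ := fun n => coefn (J w2) n with hg_def
    have hf2 : Summable fun n => ‖f n‖ ^ 2 := hH2 w1
    have hg2 : Summable fun n => ‖g n‖ ^ 2 := hH2 w2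
    obtain ⟨x1, hx1sum, _, hx1coef⟩ := stmt9_aux_build J T hJpow w1 (fun n => hTne n w1 h1)
      (fun n => hup_pow n w1) (fun m n hmn => horth1 w1 hw1 w1 hw1 m n hmn) g hg2
    obtain ⟨x2, hx2sum, _, hx2coef⟩ := stmt9_aux_build J T hJpow w2 (fun n => hTne n w2 h2)
      (fun n => hup_pow n w2) (fun m n hmn => horth1 w2 hw2 w2 hw2 m n hmn) f hf2
    have hJeq : J x1 = J x2 := by
      ext k
      rw [show PowerSeries.coeff k (J x1) = coefn (J x1) k from rfl,
        show PowerSeries.coeff k (J x2) = coefn (J x2) k from rfl, hx1coef k, hx2coef k]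
      have hrefl := Finset.sum_range_reflect (fun j => f j * g (k - j)) (k + 1)
      have hcongr : ∀ j ∈ Finset.range (k + 1),
          f (k + 1 - 1 - j) * g (k - (k + 1 - 1 - j)) = g j * f (k - j) := by
        intro j hj
        have hj' : j ≤ k := Nat.lt_succ_iff.1 (Finset.mem_range.1 hj)
        have e1 : k + 1 - 1 - j = k - j := by omega
        have e2 : k - (k - j) = j := by omega
        rw [e1, e2, mul_comm]
      rw [Finset.sum_congr rfl hcongr] at hrefl
      exact hrefl
    have hx12 : x1 = x2 := hJinj hJeq
    set v : ℕ → E := fun n => g n • (T ^ n) w1 - f n • (T ^ n) w2 with hv_def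
    have hvsum : HasSum v 0 := by
      have := hx1sum.sub hx2sum
      rwa [hx12, sub_self] at this
    have hgzero : ∀ n, g n = 0 := by
      intro n
      have hinner : ∀ m, m ≠ n → ⟪v n, v m⟫_ℂ = 0 := by
        intro m hmn
        have hnm : n ≠ m := Ne.symm hmn
        simp only [hv_def, inner_sub_left, inner_sub_right, inner_smul_left, inner_smul_right]
        rw [horth1 w1 hw1 w1 hw1 n m hnm, horth1 w1 hw1 w2 hw2 n m hnm,
          horth1 w2 hw2 w1 hw1 n m hnm, horth1 w2 hw2 w2 hw2 n m hnm]
        ring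
      have h6 : HasSum (fun m => ⟪v n, v m⟫_ℂ) 0 := by
        have := (innerSL ℂ (v n)).hasSum hvsum
        simpa using this
      have h7 : HasSum (fun m => ⟪v n, v m⟫_ℂ) ⟪v n, v n⟫_ℂ :=
        hasSum_single n (fun m hm => hinner m hm)
      have h9 : v n = 0 := inner_self_eq_zero.1 (h7.unique h6)
      have h10 : (T ^ n) (g n • w1 - f n • w2) = 0 := by
        rw [map_sub, map_smul, map_smul]
        exact h9
      have h11 : g n • w1 - f n • w2 = 0 := by
        by_contra hne
        exact hTne n _ hne h10
      have e := congrArg (fun t => ⟪w1, t⟫_ℂ) (sub_eq_zero.1 h11)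
      simp only [inner_smul_right] at e
      rw [hortho, mul_zero] at e
      have hw1inner : ⟪w1, w1⟫_ℂ ≠ 0 := fun hc => h1 (inner_self_eq_zero.1 hc)
      exact (mul_eq_zero.1 e).resolve_right hw1inner
    apply h2
    apply hJinj
    rw [map_zero]
    ext k
    have := hgzero k
    rw [hg_def] at this
    simpa [coefn] using this
  have hspan : ∀ w' ∈ W, w' = ⟪w, w'⟫_ℂ • w := by
    intro w' hw'
    have hpW : w' - ⟪w, w'⟫_ℂ • w ∈ W := Submodule.sub_mem W hw' (Submodule.smul_mem W _ hwW)
    have hpin : ⟪w, w' - ⟪w, w'⟫_ℂ • w⟫_ℂ = 0 := by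
      rw [inner_sub_right, inner_smul_right, inner_self_eq_norm_sq_to_K, hwnorm]
      norm_num
    rcases hdim w hwW _ hpW hpin with h | h
    · exact absurd h hwne
    · exact sub_eq_zero.1 h
  -- main multiplication construction
  have hmain : ∀ g : ℕ → ℂ, Summable (fun n => ‖g n‖ ^ 2) →
      ∃ x : E, J x = J w * PowerSeries.mk g ∧ ‖x‖ ^ 2 ≤ ∑' n, ‖g n‖ ^ 2 := by
    intro g hg
    obtain ⟨x, hxs, hxnorm, hxcoef⟩ := stmt9_aux_build J T hJpow w (fun n => hTne n w hwne)
      (fun n => hup_pow n w) (fun m n hmn => horth1 w hwW w hwW m n hmn) g hg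
    refine ⟨x, ?_, by simpa [hwnorm] using hxnorm⟩
    ext k
    rw [show PowerSeries.coeff k (J x) = coefn (J x) k from rfl, hxcoef k, mul_comm,
      PowerSeries.coeff_mul, Finset.Nat.sum_antidiagonal_eq_sum_range_succ_mk]
    refine Finset.sum_congr rfl (fun i hi => ?_)
    simp [PowerSeries.coeff_mk, coefn]
  -- conjunct 2
  have hconj2 : ∀ g : PowerSeries ℂ, MemH2 g → ∃ x : E, J x = J w * g ∧ ‖x‖ ≤ H2Norm g := by
    intro g hg
    obtain ⟨x, hJx, hx2⟩ := hmain (fun n => coefn g n) hg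
    have hmk : PowerSeries.mk (fun n => coefn g n) = g := by
      ext k
      rw [PowerSeries.coeff_mk]
      rfl
    refine ⟨x, by rw [hJx, hmk], ?_⟩
    rw [show ‖x‖ = Real.sqrt (‖x‖ ^ 2) from (Real.sqrt_sq (norm_nonneg x)).symm]
    exact Real.sqrt_le_sqrt hx2
  -- closure of the span
  have hclosure : (Submodule.span ℂ (Set.range fun n : ℕ => (T ^ n) w)).topologicalClosure
      = ⊤ := by
    rw [Submodule.topologicalClosure_eq_top_iff, Submodule.eq_bot_iff]
    intro y hy
    have hyT : ∀ n : ℕ, ⟪(T ^ n) w, y⟫_ℂ = 0 := fun n =>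
      ((Submodule.mem_orthogonal _ y).1 hy) _ (Submodule.subset_span ⟨n, rfl⟩)
    have hrange : ∀ k : ℕ, ∃ z, (T ^ k) z = y := by
      intro k
      induction k with
      | zero => exact ⟨y, by simp⟩
      | succ k ih =>
        obtain ⟨z, hz⟩ := ih
        have h1 : ⟪(ContinuousLinearMap.adjoint T ^ k) ((T ^ k) w), z⟫_ℂ = 0 := by
          rw [← hmove k ((T ^ k) w) z, hz]
          exact hyT k
        have h2 : (ContinuousLinearMap.adjoint T ^ k) ((T ^ k) w) ∈ W := hSW k w hwW
        have h3 := hspan _ h2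
        have h4 : ⟪w, (ContinuousLinearMap.adjoint T ^ k) ((T ^ k) w)⟫_ℂ
            = ((‖(T ^ k) w‖ : ℂ)) ^ 2 := by
          rw [← hmove2 k w ((T ^ k) w)]
          exact inner_self_eq_norm_sq_to_K _
        have h5 : ((‖(T ^ k) w‖ : ℂ)) ≠ 0 :=
          Complex.ofReal_ne_zero.2 (norm_ne_zero_iff.2 (hTne k w hwne))
        have h6 : ⟪w, z⟫_ℂ = 0 := by
          rw [h3, inner_smul_left, h4, map_pow, Complex.conj_ofReal] at h1
          rcases mul_eq_zero.1 h1 with h | h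
          · exact absurd h (pow_ne_zero 2 h5)
          · exact h
        have h7 : z ∈ (LinearMap.range (T : E →ₗ[ℂ] E) : Submodule ℂ E) := by
          rw [← Submodule.orthogonal_orthogonal (LinearMap.range (T : E →ₗ[ℂ] E) : Submodule ℂ E)]
          rw [Submodule.mem_orthogonal]
          intro u hu
          rw [hspan u hu, inner_smul_left, h6, mul_zero]
        obtain ⟨z', hz'⟩ := LinearMap.mem_range.1 h7
        simp only [ContinuousLinearMap.coe_coe] at hz'
        exact ⟨z', by rw [stmt9_aux_pow_apply_succ', hz', hz]⟩
    apply hJinj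
    rw [map_zero]
    ext k
    obtain ⟨z, hz⟩ := hrange (k + 1)
    rw [← hz, hJpow, PowerSeries.coeff_X_pow_mul']
    simp
  -- conjunct 3
  have hconj3 : Dense {x : E | ∃ g : PowerSeries ℂ, MemH2 g ∧ J x = J w * g} := by
    have hsub : ((Submodule.span ℂ (Set.range fun n : ℕ => (T ^ n) w) : Submodule ℂ E) : Set E)
        ⊆ {x : E | ∃ g : PowerSeries ℂ, MemH2 g ∧ J x = J w * g} := by
      intro x hx
      induction hx using Submodule.span_induction with
      | mem x hxm =>
        obtain ⟨n, rfl⟩ := hxm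
        exact ⟨PowerSeries.X ^ n, stmt9_aux_memH2_X_pow n, by rw [hJpow, mul_comm]⟩
      | zero => exact ⟨0, by simpa [MemH2, coefn] using summable_zero, by simp⟩
      | add x y hxm hym ihx ihy =>
        obtain ⟨g1, hg1, e1⟩ := ihx
        obtain ⟨g2, hg2, e2⟩ := ihy
        exact ⟨g1 + g2, stmt9_aux_memH2_add hg1 hg2, by rw [map_add, e1, e2, mul_add]⟩
      | smul c x hxm ih =>
        obtain ⟨g, hg, e⟩ := ih
        exact ⟨c • g, stmt9_aux_memH2_smul c hg, by rw [map_smul, e, mul_smul_comm]⟩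
    have hd : Dense ((Submodule.span ℂ (Set.range fun n : ℕ => (T ^ n) w)
        : Submodule ℂ E) : Set E) := by
      rw [dense_iff_closure_eq, ← Submodule.topologicalClosure_coe, hclosure]
      simp
    exact hd.mono hsub
  -- the H-infinity bound
  have hBound : ∃ C : ℝ, ∀ z : ℂ, ‖z‖ < 1 → ‖∑' n, coefn (J w) n * z ^ n‖ ≤ C := by
    apply stmt9_aux_hinf_bound (J w) (hH2 w)
    intro g hg
    obtain ⟨x, hJx, _⟩ := hmain g hg
    rw [← hJx]
    exact hH2 x
  exact ⟨J w, ⟨hH2 w, hBound⟩, hconj2, hconj3, w, rfl, fun n => hTne n w hwne,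
    fun m n hmn => horth1 w hwW w hwW m n hmn, hclosure⟩
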